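/- Let X and Y be real vector spaces and let r be a real number with r ≠ 0 and r ≠ 1. Suppose D : X → Y satisfies the generalized Jensen-type functional equation r D((x+y)/r) + r D((x−y)/r) = 2 D(x) for all x, y ∈ X. Then D(0) = 0, D(r x) = r D(x) for all x ∈ X, and D is additive: D(x + y) = D(x) + D(y) for all x, y ∈ X. -/
import Mathlib


/-- A solution `D` of the generalized Jensen-type functional equation
`r D((x+y)/r) + r D((x−y)/r) = 2 D(x)` (with `r ≠ 0`, `r ≠ 1`) satisfies `D(0) = 0`,
`D(rx) = rD(x)`, and is additive. -/
theorem jensen_type_additive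
    {X Y : Type*} [AddCommGroup X] [Module ℝ X] [AddCommGroup Y] [Module ℝ Y]
    (r : ℝ) (hr0 : r ≠ 0) (hr1 : r ≠ 1)
    (D : X → Y)
    (hD : ∀ x y : X, r • D (r⁻¹ • (x + y)) + r • D (r⁻¹ • (x - y)) = (2 : ℝ) • D x) :
    D 0 = 0 ∧ (∀ x : X, D (r • x) = r • D x) ∧ ∀ x y : X, D (x + y) = D x + D y := by
  have hD0 : D 0 = 0 := by
    have h := hD 0 0
    simp only [add_zero, sub_zero, smul_zero] at h
    have h2 : ((2 : ℝ) * r - 2) • D 0 = 0 := by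
      rw [sub_smul, mul_smul]
      rw [← two_smul ℝ (r • D 0)] at h
      rw [smul_comm] at h ⊢
      rw [h]; simp
    have hne : (2 : ℝ) * r - 2 ≠ 0 := by
      intro hc
      apply hr1
      linarith
    rcases smul_eq_zero.mp h2 with h | h
    · exact absurd h hne
    · exact h
  have hinv : ∀ x : X, D (r⁻¹ • x) = r⁻¹ • D x := by
    intro x
    have h := hD x 0
    simp only [add_zero, sub_zero] at h
    rw [← two_smul ℝ (r • D (r⁻¹ • x))] at h
    have h2 : (2 : ℝ) • (r • D (r⁻¹ • x)) = (2 : ℝ) • (r • (r⁻¹ • D x)) := by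
      rw [h, smul_inv_smul₀ hr0]
    have h3 := smul_right_injective Y (two_ne_zero (α := ℝ)) h2
    have h4 := smul_right_injective Y hr0 h3
    exact h4
  have hmul : ∀ x : X, D (r • x) = r • D x := by
    intro x
    have h := hinv (r • x)
    rw [inv_smul_smul₀ hr0] at h
    rw [h, smul_inv_smul₀ hr0]
  have hJ : ∀ x y : X, D (x + y) + D (x - y) = (2 : ℝ) • D x := by
    intro x y
    have h := hD x y
    rw [hinv, hinv, smul_inv_smul₀ hr0, smul_inv_smul₀ hr0] at h
    exact h
  refine ⟨hD0, hmul, ?_⟩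
  intro x y
  set a : X := (2 : ℝ)⁻¹ • (x + y) with ha
  set b : X := (2 : ℝ)⁻¹ • (x - y) with hb
  have hab : a + b = x := by
    rw [ha, hb, ← smul_add]
    have : x + y + (x - y) = (2 : ℝ) • x := by
      rw [two_smul]; abel
    rw [this, inv_smul_smul₀ (two_ne_zero (α := ℝ))]
  have hab' : a - b = y := by
    rw [ha, hb, ← smul_sub]
    have : x + y - (x - y) = (2 : ℝ) • y := by
      rw [two_smul]; abel
    rw [this, inv_smul_smul₀ (two_ne_zero (α := ℝ))]
  have h1 := hJ a b
  rw [hab, hab'] at h1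
  have h2 := hJ a a
  rw [sub_self, hD0, add_zero] at h2
  have haa : a + a = x + y := by
    rw [ha, ← two_smul ℝ, smul_inv_smul₀ (two_ne_zero (α := ℝ))]
  rw [haa] at h2
  rw [h2, ← h1]
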